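/- arXiv:1111.2942 — 7 statements merged into one kernel-verified Lean document; each statement's English description precedes it below -/
import Mathlib

section
/- Let P be a set of n points in ℝ^d, let k ≥ 1 divide n, and let (c_i, r_i, P_i), i = 1, …, n/k, be a 2-approximate quorum clustering of P with parameter k. Then for every query point q ∈ ℝ^d, the quantity x = min_{i = 1, …, n/k} (‖q − c_i‖ + r_i) satisfies x/5 ≤ d_k(P,q) ≤ x. -/
open Metric

/-- The `k`-th nearest neighbor distance of `q` to the finite point set `P`. -/
noncomputable def kthNNDist {d : ℕ} (k : ℕ) (P : Finset (EuclideanSpace ℝ (Fin d)))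
    (q : EuclideanSpace ℝ (Fin d)) : ℝ :=
  sInf {r : ℝ | 0 ≤ r ∧ k ≤ (P.filter fun p => dist q p ≤ r).card}

/-- `rad_k Q`: the radius of the smallest closed ball containing at least `k` points of `Q`. -/
noncomputable def radk {d : ℕ} (k : ℕ) (Q : Finset (EuclideanSpace ℝ (Fin d))) : ℝ :=
  sInf (Set.range fun q => kthNNDist k Q q)

lemma kthNNDist_nonneg {d k : ℕ} (P : Finset (EuclideanSpace ℝ (Fin d)))
    (q : EuclideanSpace ℝ (Fin d)) : 0 ≤ kthNNDist k P q := by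
  apply Real.sInf_nonneg
  rintro x ⟨hx, -⟩
  exact hx

lemma radk_nonneg {d k : ℕ} (Q : Finset (EuclideanSpace ℝ (Fin d))) : 0 ≤ radk k Q := by
  apply Real.sInf_nonneg
  rintro x ⟨p, rfl⟩
  exact kthNNDist_nonneg _ _

lemma kthNNDist_mem {d k : ℕ} (P : Finset (EuclideanSpace ℝ (Fin d)))
    (q : EuclideanSpace ℝ (Fin d)) (hk : 1 ≤ k) (hkP : k ≤ P.card) :
    k ≤ (P.filter fun p => dist q p ≤ kthNNDist k P q).card := by
  set S : Set ℝ := {r : ℝ | 0 ≤ r ∧ k ≤ (P.filter fun p => dist q p ≤ r).card} with hSdef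
  have ht : kthNNDist k P q = sInf S := rfl
  have hPne : P.Nonempty := Finset.card_pos.mp (lt_of_lt_of_le hk hkP)
  set M := P.sup' hPne (fun p => dist q p) with hM
  have hMS : M ∈ S := by
    constructor
    · obtain ⟨p, hp⟩ := hPne
      exact le_trans dist_nonneg (Finset.le_sup' _ hp)
    · have : P.filter (fun p => dist q p ≤ M) = P :=
        Finset.filter_true_of_mem (fun p hp => Finset.le_sup' _ hp)
      rw [this]; exact hkP
  have hSne : S.Nonempty := ⟨M, hMS⟩
  set t := kthNNDist k P q with htdef
  by_cases hB : (P.filter fun p => t < dist q p).Nonempty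
  · set B := P.filter fun p => t < dist q p with hBdef
    have hεpos : t < B.inf' hB (fun p => dist q p) := by
      rw [Finset.lt_inf'_iff]
      intro b hb
      exact (Finset.mem_filter.mp hb).2
    have : sInf S < B.inf' hB (fun p => dist q p) := by rw [← ht]; exact hεpos
    obtain ⟨s, hsS, hs⟩ := exists_lt_of_csInf_lt hSne this
    have hsub : (P.filter fun p => dist q p ≤ s) ⊆ (P.filter fun p => dist q p ≤ t) := by
      intro p hp
      obtain ⟨hpP, hps⟩ := Finset.mem_filter.mp hp
      refine Finset.mem_filter.mpr ⟨hpP, ?_⟩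
      by_contra h
      push_neg at h
      have hpB : p ∈ B := Finset.mem_filter.mpr ⟨hpP, h⟩
      have := Finset.inf'_le (fun p => dist q p) hpB
      linarith
    exact le_trans hsS.2 (Finset.card_le_card hsub)
  · rw [Finset.not_nonempty_iff_eq_empty, Finset.filter_eq_empty_iff] at hB
    have : P.filter (fun p => dist q p ≤ t) = P := by
      apply Finset.filter_true_of_mem
      intro p hp
      have := hB hp
      push_neg at this
      exact this
    rw [this]; exact hkP

open Classical in
/-- For a 2-approximate quorum clustering of `P`, the quantity
`x = min_i (‖q - c i‖ + r i)` satisfies `x / 5 ≤ d_k(P, q) ≤ x`. -/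
theorem quorum_clustering_approximates_kthNN {d n k : ℕ} (hk : 1 ≤ k) (hdvd : k ∣ n)
    (hn : 0 < n) (P : Finset (EuclideanSpace ℝ (Fin d))) (hP : P.card = n)
    (c : Fin (n / k) → EuclideanSpace ℝ (Fin d)) (r : Fin (n / k) → ℝ)
    (Q : Fin (n / k) → Finset (EuclideanSpace ℝ (Fin d)))
    (hdisj : ∀ i j, i ≠ j → Disjoint (Q i) (Q j))
    (hunion : Finset.univ.biUnion Q = P)
    (hcard : ∀ i, (Q i).card = k)
    (hcover : ∀ i, ↑(Q i) ⊆ closedBall (c i) (r i))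
    (happrox : ∀ i,
      r i / 2 ≤ radk k (P \ (Finset.univ.filter fun j => j < i).biUnion Q) ∧
      radk k (P \ (Finset.univ.filter fun j => j < i).biUnion Q) ≤ r i)
    (q : EuclideanSpace ℝ (Fin d)) :
    (⨅ i, (dist q (c i) + r i)) / 5 ≤ kthNNDist k P q ∧
      kthNNDist k P q ≤ ⨅ i, (dist q (c i) + r i) := by
  have hkn : k ≤ n := Nat.le_of_dvd hn hdvd
  have hnk : 0 < n / k := Nat.div_pos hkn (by omega)
  haveI : Nonempty (Fin (n / k)) := ⟨⟨0, hnk⟩⟩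
  have hrnn : ∀ i, 0 ≤ r i := fun i => le_trans (radk_nonneg _) (happrox i).2
  -- membership of Q i points in P
  have hQP : ∀ i, ∀ p ∈ Q i, p ∈ P := by
    intro i p hp
    rw [← hunion]
    exact Finset.mem_biUnion.mpr ⟨i, Finset.mem_univ i, hp⟩
  -- lower-boundedness of the iInf family
  have hbdd : BddBelow (Set.range fun i => dist q (c i) + r i) := by
    refine ⟨0, ?_⟩
    rintro x ⟨i, rfl⟩
    exact add_nonneg dist_nonneg (hrnn i)
  -- upper bound part
  have hub : kthNNDist k P q ≤ ⨅ i, (dist q (c i) + r i) := by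
    apply le_ciInf
    intro i
    apply csInf_le ⟨0, fun x hx => hx.1⟩
    constructor
    · exact add_nonneg dist_nonneg (hrnn i)
    · rw [← hcard i]
      apply Finset.card_le_card
      intro p hp
      refine Finset.mem_filter.mpr ⟨hQP i p hp, ?_⟩
      have hpc : dist p (c i) ≤ r i := mem_closedBall.mp (hcover i hp)
      calc dist q p ≤ dist q (c i) + dist (c i) p := dist_triangle _ _ _
        _ ≤ dist q (c i) + r i := by
            have hcp : dist (c i) p = dist p (c i) := dist_comm _ _
            linarith
  refine ⟨?_, hub⟩
  -- lower bound part
  set t := kthNNDist k P q with htdef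
  have htnn : 0 ≤ t := kthNNDist_nonneg _ _
  have hmem : k ≤ (P.filter fun p => dist q p ≤ t).card :=
    kthNNDist_mem P q hk (by rw [hP]; exact hkn)
  set A := P.filter fun p => dist q p ≤ t with hA
  have hAne : A.Nonempty := Finset.card_pos.mp (lt_of_lt_of_le hk hmem)
  -- the set of indices whose cluster meets A
  set T : Finset (Fin (n / k)) := Finset.univ.filter fun i => (Q i ∩ A).Nonempty with hT
  have hTne : T.Nonempty := by
    obtain ⟨a, ha⟩ := hAne
    have haP : a ∈ P := (Finset.mem_filter.mp ha).1
    rw [← hunion] at haP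
    obtain ⟨i, -, hi⟩ := Finset.mem_biUnion.mp haP
    exact ⟨i, Finset.mem_filter.mpr ⟨Finset.mem_univ i, ⟨a, Finset.mem_inter.mpr ⟨hi, ha⟩⟩⟩⟩
  set i := T.min' hTne with hi
  have hiT : i ∈ T := T.min'_mem hTne
  obtain ⟨p, hp⟩ := (Finset.mem_filter.mp hiT).2
  have hpQ : p ∈ Q i := (Finset.mem_inter.mp hp).1
  have hpA : p ∈ A := (Finset.mem_inter.mp hp).2
  have hpt : dist q p ≤ t := (Finset.mem_filter.mp hpA).2
  -- A is contained in the residual set R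
  set R := P \ (Finset.univ.filter fun j => j < i).biUnion Q with hR
  have hAR : A ⊆ R := by
    intro a ha
    refine Finset.mem_sdiff.mpr ⟨(Finset.mem_filter.mp ha).1, ?_⟩
    intro hmem'
    obtain ⟨j, hj, haj⟩ := Finset.mem_biUnion.mp hmem'
    have hji : j < i := (Finset.mem_filter.mp hj).2
    have : j ∈ T := Finset.mem_filter.mpr ⟨Finset.mem_univ j,
      ⟨a, Finset.mem_inter.mpr ⟨haj, ha⟩⟩⟩
    exact absurd (T.min'_le j this) (not_le.mpr hji)
  -- t witnesses k points of R, so kthNNDist of R ≤ t, hence radk R ≤ t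
  have hRt : kthNNDist k R q ≤ t := by
    apply csInf_le ⟨0, fun x hx => hx.1⟩
    refine ⟨htnn, ?_⟩
    calc k ≤ A.card := hmem
      _ ≤ (R.filter fun p => dist q p ≤ t).card := by
          apply Finset.card_le_card
          intro a ha
          exact Finset.mem_filter.mpr ⟨hAR ha, (Finset.mem_filter.mp ha).2⟩
  have hradk : radk k R ≤ t := by
    have hbb : BddBelow (Set.range fun q' => kthNNDist k R q') := by
      refine ⟨0, ?_⟩
      rintro x ⟨p', rfl⟩
      exact kthNNDist_nonneg _ _
    exact le_trans (csInf_le hbb ⟨q, rfl⟩) hRt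
  have hri : r i ≤ 2 * t := by
    have := (happrox i).1
    rw [← hR] at this
    linarith
  have hqc : dist q (c i) ≤ t + r i := by
    have hpc : dist p (c i) ≤ r i := mem_closedBall.mp (hcover i hpQ)
    calc dist q (c i) ≤ dist q p + dist p (c i) := dist_triangle _ _ _
      _ ≤ t + r i := by linarith
  have hfinal : (⨅ j, (dist q (c j) + r j)) ≤ 5 * t := by
    calc (⨅ j, (dist q (c j) + r j)) ≤ dist q (c i) + r i := ciInf_le hbdd i
      _ ≤ 5 * t := by linarith
  linarith
end

section
/- Let P be a set of n points in ℝ^d, let k ≥ 1 divide n, let (c_i, r_i, P_i), i = 1, …, n/k, be a 2-approximate quorum clustering of P with parameter k, let ε ∈ (0,1], let q ∈ ℝ^d, and write D = d_k(P,q) and q̂ = (q,0) ∈ ℝ^{d+1}. Suppose an index a satisfies B(c_a, r_a) ∩ B(q, D) ≠ ∅ and r_a < εD/4, and suppose an index j satisfies ‖q̂ − (c_j, r_j)‖ ≤ (1 + ε/8) · ‖q̂ − (c_a, r_a)‖ (Euclidean norm in ℝ^{d+1}) and r_j < εD/4. Then D ≤ ‖q − c_j‖ + r_j ≤ (1 +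 ε) · D. -/
open Metric

/-- Lift a point `p ∈ ℝ^d` together with a real `t` to the point `(p, t) ∈ ℝ^{d+1}`. -/
noncomputable def liftPt {d : ℕ} (p : EuclideanSpace ℝ (Fin d)) (t : ℝ) :
    EuclideanSpace ℝ (Fin (d + 1)) :=
  WithLp.toLp 2 (Fin.snoc (α := fun _ => ℝ) (WithLp.ofLp p) t)

/-!
The `k` points of the cluster `P_j` lie in `B(c_j, r_j) ⊆ B(q, ‖q - c_j‖ + r_j)`, which gives the
lower bound. For the upper bound, a ball meeting `B(q, D)` has `‖q - c_a‖ ≤ D + r_a`, and lifting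
changes distances by at most the radius: `‖q - c_j‖ ≤ ‖q̂ - (c_j, r_j)‖` and
`‖q̂ - (c_a, r_a)‖ ≤ ‖q - c_a‖ + r_a`. Hence `‖q - c_j‖ ≤ (1 + ε/8)(D + 2 r_a)`, and the smallness
of `r_a` and `r_j` absorbs everything into `(1 + ε) D`.
-/

section Lift

variable {d : ℕ}

lemma dist_liftPt_sq (p p' : EuclideanSpace ℝ (Fin d)) (s t : ℝ) :
    dist (liftPt p s) (liftPt p' t) ^ 2 = dist p p' ^ 2 + (s - t) ^ 2 := by
  rw [EuclideanSpace.dist_eq, EuclideanSpace.dist_eq, Real.sq_sqrt (by positivity),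
    Real.sq_sqrt (by positivity), Fin.sum_univ_castSucc]
  simp [liftPt, Real.dist_eq, sq_abs]

lemma dist_le_dist_liftPt (p p' : EuclideanSpace ℝ (Fin d)) (s t : ℝ) :
    dist p p' ≤ dist (liftPt p s) (liftPt p' t) := by
  refine le_of_sq_le_sq ?_ dist_nonneg
  rw [dist_liftPt_sq]
  nlinarith [sq_nonneg (s - t)]

lemma dist_liftPt_le (p p' : EuclideanSpace ℝ (Fin d)) (s t : ℝ) :
    dist (liftPt p s) (liftPt p' t) ≤ dist p p' + |s - t| := by
  refine le_of_sq_le_sq ?_ (by positivity)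
  rw [dist_liftPt_sq, add_sq, sq_abs]
  nlinarith [dist_nonneg (x := p) (y := p'), abs_nonneg (s - t)]

end Lift

lemma kthNNDist_le_of_subset_closedBall {d k : ℕ} (hk : 0 < k)
    {P S : Finset (EuclideanSpace ℝ (Fin d))} {q : EuclideanSpace ℝ (Fin d)} {x : ℝ}
    (hSP : S ⊆ P) (hS : k ≤ S.card) (hSx : ↑S ⊆ closedBall q x) :
    kthNNDist k P q ≤ x := by
  have hx : 0 ≤ x := by
    obtain ⟨p, hp⟩ := Finset.card_pos.1 (hk.trans_le hS)
    exact nonempty_closedBall.1 ⟨p, hSx hp⟩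
  refine csInf_le ⟨0, fun _ hy => hy.1⟩ ⟨hx, hS.trans (Finset.card_le_card fun p hp => ?_)⟩
  exact Finset.mem_filter.2 ⟨hSP hp, dist_comm p q ▸ hSx hp⟩

open Classical in
theorem general_case_approx_general {d n k : ℕ} (hk : 1 ≤ k)
    (P : Finset (EuclideanSpace ℝ (Fin d)))
    (c : Fin (n / k) → EuclideanSpace ℝ (Fin d)) (r : Fin (n / k) → ℝ)
    (Q : Fin (n / k) → Finset (EuclideanSpace ℝ (Fin d)))
    (hunion : Finset.univ.biUnion Q = P)
    (hcard : ∀ i, (Q i).card = k)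
    (hcover : ∀ i, ↑(Q i) ⊆ closedBall (c i) (r i))
    (ε : ℝ) (hε0 : 0 < ε) (hε1 : ε ≤ 1)
    (q : EuclideanSpace ℝ (Fin d)) (D : ℝ) (hD : D = kthNNDist k P q)
    (a j : Fin (n / k))
    (ha1 : (closedBall (c a) (r a) ∩ closedBall q D).Nonempty)
    (ha2 : r a < ε * D / 4)
    (hj1 : dist (liftPt q 0) (liftPt (c j) (r j)) ≤
      (1 + ε / 8) * dist (liftPt q 0) (liftPt (c a) (r a)))
    (hj2 : r j < ε * D / 4) :
    D ≤ dist q (c j) + r j ∧ dist q (c j) + r j ≤ (1 + ε) * D := by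
  have hD0 : 0 ≤ D := hD ▸ kthNNDist_nonneg P q
  have hQjP : Q j ⊆ P := hunion ▸ Finset.subset_biUnion_of_mem Q (Finset.mem_univ j)
  have hQj : ↑(Q j) ⊆ closedBall q (dist q (c j) + r j) :=
    (hcover j).trans (closedBall_subset_closedBall' (by rw [dist_comm, add_comm]))
  refine ⟨hD ▸ kthNNDist_le_of_subset_closedBall hk hQjP (hcard j).ge hQj, ?_⟩
  have hra : 0 ≤ r a := nonempty_closedBall.1 (ha1.mono Set.inter_subset_left)
  have hqa : dist q (c a) ≤ D + r a := by
    linarith [dist_le_add_of_nonempty_closedBall_inter_closedBall ha1, dist_comm q (c a)]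
  have hqj : dist q (c j) ≤ (1 + ε / 8) * (D + 2 * r a) :=
    calc dist q (c j) ≤ dist (liftPt q 0) (liftPt (c j) (r j)) := dist_le_dist_liftPt _ _ _ _
      _ ≤ (1 + ε / 8) * (dist q (c a) + |0 - r a|) := hj1.trans (by gcongr; exact dist_liftPt_le ..)
      _ ≤ (1 + ε / 8) * (D + 2 * r a) := by
        rw [zero_sub, abs_neg, abs_of_nonneg hra]
        exact mul_le_mul_of_nonneg_left (by linarith) (by positivity)
  -- `ε² D / 16 ≤ ε D / 8` absorbs the cross term of `(1 + ε/8)(1 + ε/2) D`.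
  nlinarith [mul_le_mul_of_nonneg_right hε1 (mul_nonneg hε0.le hD0)]

open Classical in
/-- The general case of the correctness proof: if `a` is an index whose ball meets
`B(q, D)` and has radius `< εD/4`, and `j` is a `(1 + ε/8)`-approximate nearest neighbor
of `q̂ = (q, 0)` among the lifted balls with `r j < εD/4`, then
`D ≤ ‖q - c_j‖ + r_j ≤ (1 + ε) D`, where `D = d_k(P, q)`. -/
theorem general_case_approx {d n k : ℕ} (hk : 1 ≤ k) (hdvd : k ∣ n)
    (hn : 0 < n) (P : Finset (EuclideanSpace ℝ (Fin d))) (hP : P.card = n)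
    (c : Fin (n / k) → EuclideanSpace ℝ (Fin d)) (r : Fin (n / k) → ℝ)
    (Q : Fin (n / k) → Finset (EuclideanSpace ℝ (Fin d)))
    (hdisj : ∀ i j, i ≠ j → Disjoint (Q i) (Q j))
    (hunion : Finset.univ.biUnion Q = P)
    (hcard : ∀ i, (Q i).card = k)
    (hcover : ∀ i, ↑(Q i) ⊆ closedBall (c i) (r i))
    (happrox : ∀ i,
      r i / 2 ≤ radk k (P \ (Finset.univ.filter fun j => j < i).biUnion Q) ∧
      radk k (P \ (Finset.univ.filter fun j => j < i).biUnion Q) ≤ r i)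
    (ε : ℝ) (hε0 : 0 < ε) (hε1 : ε ≤ 1)
    (q : EuclideanSpace ℝ (Fin d)) (D : ℝ) (hD : D = kthNNDist k P q)
    (a j : Fin (n / k))
    (ha1 : (closedBall (c a) (r a) ∩ closedBall q D).Nonempty)
    (ha2 : r a < ε * D / 4)
    (hj1 : dist (liftPt q 0) (liftPt (c j) (r j)) ≤
      (1 + ε / 8) * dist (liftPt q 0) (liftPt (c a) (r a)))
    (hj2 : r j < ε * D / 4) :
    D ≤ dist q (c j) + r j ∧ dist q (c j) + r j ≤ (1 + ε) * D :=
  general_case_approx_general hk P c r Q hunion hcard hcover ε hε0 hε1 q D hD a j ha1 ha2 hj1 hj2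
end

section
/- Let f : ℝ → [0, ∞) be a monotone nondecreasing function, let P be a set of n points in ℝ^d, let 1 ≤ k ≤ n be an integer, let ε ∈ (0,1], and let q ∈ ℝ^d. Define D = Σ_{i=1}^{k} f(d_i(P,q)) and D̃ = Σ_{i=⌈kε/8⌉}^{k} f(d_i(P,q)). Then D̃ ≤ D ≤ (1 + ε/4) · D̃. -/
open Metric

/-- Dropping the first `⌈kε/8⌉ - 1` terms of `D = Σ_{i=1}^k f(d_i(P,q))` yields a
`(1 + ε/4)`-approximation `D̃ = Σ_{i=⌈kε/8⌉}^k f(d_i(P,q))`: `D̃ ≤ D ≤ (1 + ε/4) D̃`. -/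
theorem truncated_sum_approximates {d n k : ℕ}
    (P : Finset (EuclideanSpace ℝ (Fin d))) (hP : P.card = n)
    (hk1 : 1 ≤ k) (hkn : k ≤ n) (ε : ℝ) (hε0 : 0 < ε) (hε1 : ε ≤ 1)
    (f : ℝ → ℝ) (hf : Monotone f) (hf0 : ∀ x, 0 ≤ f x)
    (q : EuclideanSpace ℝ (Fin d)) :
    (∑ i ∈ Finset.Icc ⌈(k : ℝ) * ε / 8⌉₊ k, f (kthNNDist i P q)) ≤
        (∑ i ∈ Finset.Icc 1 k, f (kthNNDist i P q)) ∧
      (∑ i ∈ Finset.Icc 1 k, f (kthNNDist i P q)) ≤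
        (1 + ε / 4) * ∑ i ∈ Finset.Icc ⌈(k : ℝ) * ε / 8⌉₊ k, f (kthNNDist i P q) := by
  have hPcard : k ≤ P.card := by omega
  have hkR : (1 : ℝ) ≤ (k : ℝ) := by exact_mod_cast hk1
  set m := ⌈(k : ℝ) * ε / 8⌉₊ with hm
  have hm1 : 1 ≤ m := Nat.one_le_ceil_iff.mpr (by positivity)
  have hmk : m ≤ k := Nat.ceil_le.mpr (by nlinarith)
  have hmlt : ((m : ℝ)) < (k : ℝ) * ε / 8 + 1 := Nat.ceil_lt_add_one (by positivity)
  -- monotonicity of kthNNDist in the index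
  have hPne : P.Nonempty := Finset.card_pos.mp (by omega)
  have hmono : ∀ i j : ℕ, i ≤ j → j ≤ P.card → kthNNDist i P q ≤ kthNNDist j P q := by
    intro i j hij hj
    apply csInf_le_csInf
    · exact ⟨0, fun r hr => hr.1⟩
    · refine ⟨P.sup' hPne fun p => dist q p, ?_, ?_⟩
      · obtain ⟨p0, hp0⟩ := hPne
        exact le_trans dist_nonneg (Finset.le_sup' (fun p => dist q p) hp0)
      · have : P.filter (fun p => dist q p ≤ P.sup' hPne fun p => dist q p) = P := by
          apply Finset.filter_true_of_mem
          intro p hp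
          exact Finset.le_sup' (fun p => dist q p) hp
        rw [this]; omega
    · intro r hr
      exact ⟨hr.1, le_trans hij hr.2⟩
  set c := f (kthNNDist m P q) with hc
  have hIcc1 : Finset.Icc 1 k = Finset.Ioc 0 k := rfl
  have hIccm : Finset.Icc m k = Finset.Ioc (m - 1) k := by
    ext x
    simp only [Finset.mem_Icc, Finset.mem_Ioc]
    omega
  have hsplit : (∑ i ∈ Finset.Ioc 0 (m - 1), f (kthNNDist i P q)) +
      (∑ i ∈ Finset.Ioc (m - 1) k, f (kthNNDist i P q)) =
      ∑ i ∈ Finset.Ioc 0 k, f (kthNNDist i P q) :=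
    Finset.sum_Ioc_consecutive _ (Nat.zero_le _) (by omega)
  have hS0nonneg : 0 ≤ ∑ i ∈ Finset.Ioc 0 (m - 1), f (kthNNDist i P q) :=
    Finset.sum_nonneg fun i _ => hf0 _
  have hb1 : (∑ i ∈ Finset.Ioc 0 (m - 1), f (kthNNDist i P q)) ≤ ((m : ℝ) - 1) * c := by
    have := Finset.sum_le_card_nsmul (Finset.Ioc 0 (m - 1)) (fun i => f (kthNNDist i P q)) c
      (fun i hi => hf (hmono i m (by simp [Finset.mem_Ioc] at hi; omega) (le_trans hmk hPcard)))
    rw [Nat.card_Ioc, nsmul_eq_mul] at this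
    have hcast : ((m - 1 - 0 : ℕ) : ℝ) = (m : ℝ) - 1 := by
      rw [Nat.sub_zero, Nat.cast_sub hm1, Nat.cast_one]
    rwa [hcast] at this
  have hb2 : ((k : ℝ) - (m : ℝ) + 1) * c ≤
      ∑ i ∈ Finset.Ioc (m - 1) k, f (kthNNDist i P q) := by
    have := Finset.card_nsmul_le_sum (Finset.Ioc (m - 1) k) (fun i => f (kthNNDist i P q)) c
      (fun i hi => by
        simp only [Finset.mem_Ioc] at hi
        exact hf (hmono m i (by omega) (by omega)))
    rw [Nat.card_Ioc, nsmul_eq_mul] at this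
    have hcast : ((k - (m - 1) : ℕ) : ℝ) = (k : ℝ) - (m : ℝ) + 1 := by
      have h1 : m - 1 ≤ k := by omega
      rw [Nat.cast_sub h1, Nat.cast_sub hm1, Nat.cast_one]; ring
    rwa [hcast] at this
  have hcnn : 0 ≤ c := hf0 _
  have hkey : ((m : ℝ) - 1) ≤ ε / 4 * ((k : ℝ) - (m : ℝ) + 1) := by
    nlinarith [mul_lt_mul_of_pos_left hmlt hε0, mul_le_mul_of_nonneg_left hε1 hε0.le,
      mul_pos (show (0:ℝ) < (k:ℝ) by linarith) hε0]
  have hDtilde_nonneg : 0 ≤ ∑ i ∈ Finset.Ioc (m - 1) k, f (kthNNDist i P q) :=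
    Finset.sum_nonneg fun i _ => hf0 _
  rw [hIcc1, hIccm]
  constructor
  · linarith
  · nlinarith [mul_le_mul_of_nonneg_right hkey hcnn,
      mul_le_mul_of_nonneg_left hb2 (le_of_lt (by linarith : (0:ℝ) < ε / 4))]
end

section
/- There is a universal constant C > 0 such that for all integers k ≥ 2 and all ε ∈ (0,1] the following holds: there exist a set of indices I ⊆ {⌈kε/8⌉, …, k} with |I| ≤ C · ε^{−1} · log k, and weights w_i ≥ 0 for i ∈ I, such that for every nondecreasing sequence of nonnegative reals a_{⌈kε/8⌉} ≤ a_{⌈kε/8⌉+1} ≤ ⋯ ≤ a_k one has (1 − ε/4) · Σ_{i ∈ I} w_i a_i ≤ Σ_{i=⌈kε/8⌉}^{k} a_i ≤ (1 + ε/4) · Σ_{i ∈ I} w_i a_i. In particular, for any set P of n ≥ k points in ℝ^d, any monotone nondecreasing f : ℝ → [0,∞), and any query point q ∈ ℝ^d, the weighted sum Σ_{i ∈ I} w_i f(d_i(P,q)) approximates Σ_{i=⌈kε/8⌉}^{k} f(d_i(P,q)) to within a multiplicative factor 1 ± ε/4. -/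
/-!
Round every index `x ∈ [m, k]` up to the nearest point of the form `k - g t`, where the grid
`g` has gaps `g (t + 1) - g t ≈ δ (g t + 1)`; since `g` grows like `(1 + δ) ^ t`, only
`O(δ⁻¹ log k)` points occur, and the coreset weight of a point is the number of indices rounded
to it. Rounding up can only increase a monotone sum. Conversely, writing a monotone sequence as a
sum of nonnegative step functions `[j ≤ ·]` (a layer cake), it suffices to compare, for every
threshold `j`, the number of indices `≥ j` before and after rounding: the indices lifted to `≥ j`
all lie in the grid gap containing `j`, and there are at most `δ (k - j + 1)` of them.
-/

open Metric

open Finset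

section LayerCake

def increment (a : ℕ → ℝ) (m j : ℕ) : ℝ := if j = m then a m else a j - a (j - 1)

variable {a : ℕ → ℝ} {m k : ℕ}

lemma sum_Icc_increment {i : ℕ} (hmi : m ≤ i) : ∑ j ∈ Icc m i, increment a m j = a i := by
  induction i, hmi using Nat.le_induction with
  | base => simp [increment]
  | succ i hmi ih =>
    rw [sum_Icc_succ_top (by omega), ih, increment, if_neg (by omega), Nat.add_sub_cancel]
    ring

lemma increment_nonneg (ha : MonotoneOn a (Set.Icc m k)) (ha0 : 0 ≤ a m) {j : ℕ}
    (hj : j ∈ Icc m k) : 0 ≤ increment a m j := by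
  rw [mem_Icc] at hj
  unfold increment
  split_ifs with hjm
  · exact ha0
  · exact sub_nonneg.2 (ha ⟨by omega, by omega⟩ hj (Nat.sub_le j 1))

lemma sum_comp_eq_sum_card_mul_increment {ι : Type*} (s : Finset ι) {h : ι → ℕ}
    (hh : ∀ x ∈ s, h x ∈ Icc m k) (a : ℕ → ℝ) :
    ∑ x ∈ s, a (h x) = ∑ j ∈ Icc m k, (#{x ∈ s | j ≤ h x} : ℝ) * increment a m j := by
  calc ∑ x ∈ s, a (h x)
      = ∑ x ∈ s, ∑ j ∈ Icc m k, if j ≤ h x then increment a m j else 0 := by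
        refine sum_congr rfl fun x hx => ?_
        have hx := mem_Icc.1 (hh x hx)
        rw [← sum_Icc_increment (a := a) hx.1, ← sum_filter]
        congr 1
        ext j
        simp only [mem_Icc, mem_filter]
        omega
    _ = ∑ j ∈ Icc m k, (#{x ∈ s | j ≤ h x} : ℝ) * increment a m j := by
        rw [sum_comm]
        refine sum_congr rfl fun j _ => ?_
        rw [← sum_filter, sum_const, nsmul_eq_mul]

lemma mul_sum_comp_le_sum_comp {ι : Type*} {s : Finset ι} {g h : ι → ℕ} {c : ℝ}
    (ha : MonotoneOn a (Set.Icc m k)) (ha0 : 0 ≤ a m)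
    (hg : ∀ x ∈ s, g x ∈ Icc m k) (hh : ∀ x ∈ s, h x ∈ Icc m k)
    (hcount : ∀ j ∈ Icc m k, c * #{x ∈ s | j ≤ g x} ≤ #{x ∈ s | j ≤ h x}) :
    c * ∑ x ∈ s, a (g x) ≤ ∑ x ∈ s, a (h x) := by
  rw [sum_comp_eq_sum_card_mul_increment s hg, sum_comp_eq_sum_card_mul_increment s hh, mul_sum]
  refine sum_le_sum fun j hj => ?_
  rw [← mul_assoc]
  exact mul_le_mul_of_nonneg_right (hcount j hj) (increment_nonneg ha ha0 hj)

end LayerCake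

section Grid

noncomputable def grid (δ : ℝ) : ℕ → ℕ
  | 0 => 0
  | t + 1 => grid δ t + 1 + ⌊δ * (grid δ t + 1)⌋₊

noncomputable def gridIndex (δ : ℝ) (u : ℕ) : ℕ := Nat.findGreatest (fun t => grid δ t ≤ u) u

variable {δ : ℝ}

lemma strictMono_grid (δ : ℝ) : StrictMono (grid δ) :=
  strictMono_nat_of_lt_succ fun t => by simp only [grid]; omega

lemma grid_succ_le (hδ : 0 ≤ δ) (t : ℕ) : (grid δ (t + 1) : ℝ) ≤ (1 + δ) * (grid δ t + 1) := by
  have := Nat.floor_le (a := δ * (grid δ t + 1)) (by positivity)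
  simp only [grid]
  push_cast
  linarith

lemma one_add_pow_le_grid_add_one (hδ : 0 ≤ δ) : ∀ t, (1 + δ) ^ t ≤ grid δ t + 1
  | 0 => by simp [grid]
  | t + 1 => by
    have ih := one_add_pow_le_grid_add_one hδ t
    have := Nat.lt_floor_add_one (δ * (grid δ t + 1))
    simp only [grid]
    push_cast
    rw [pow_succ]
    nlinarith

lemma gc_grid_gridIndex (δ : ℝ) : GaloisConnection (grid δ) (gridIndex δ) := fun t u =>
  ⟨fun h => Nat.le_findGreatest ((strictMono_grid δ).id_le t |>.trans h) h,
    fun h => ((strictMono_grid δ).monotone h).trans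
      (Nat.findGreatest_spec (P := fun t => grid δ t ≤ u) (Nat.zero_le u) (by simp [grid]))⟩

lemma grid_gridIndex_le (δ : ℝ) (u : ℕ) : grid δ (gridIndex δ u) ≤ u :=
  (gc_grid_gridIndex δ).l_u_le u

lemma lt_grid_gridIndex_succ (δ : ℝ) (u : ℕ) : u < grid δ (gridIndex δ u + 1) :=
  lt_of_not_ge fun h => Nat.not_succ_le_self _ ((gc_grid_gridIndex δ _ _).1 h)

lemma one_add_pow_gridIndex_le (hδ : 0 ≤ δ) (u : ℕ) : (1 + δ) ^ gridIndex δ u ≤ u + 1 :=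
  (one_add_pow_le_grid_add_one hδ _).trans
    (by exact_mod_cast Nat.succ_le_succ (grid_gridIndex_le δ u))

end Grid

section Rounding

/-- Rounds `x ≤ k` up to the nearest point `k - grid δ t`. -/
noncomputable def roundUp (δ : ℝ) (k x : ℕ) : ℕ := k - grid δ (gridIndex δ (k - x))

variable {δ : ℝ} {m k x : ℕ}

lemma le_roundUp (hx : x ≤ k) : x ≤ roundUp δ k x := by
  have := grid_gridIndex_le δ (k - x)
  unfold roundUp
  omega

lemma roundUp_mem_Icc (hx : x ∈ Icc m k) : roundUp δ k x ∈ Icc m k := by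
  rw [mem_Icc] at hx ⊢
  exact ⟨hx.1.trans (le_roundUp hx.2), Nat.sub_le _ _⟩

lemma card_filter_le_roundUp_le {j : ℕ} :
    #{x ∈ Icc m k | j ≤ roundUp δ k x} ≤ grid δ (gridIndex δ (k - j) + 1) := by
  set N := grid δ (gridIndex δ (k - j) + 1)
  calc #{x ∈ Icc m k | j ≤ roundUp δ k x} ≤ #((range N).image (k - ·)) := by
        refine card_le_card fun x hx => ?_
        obtain ⟨hxI, hjx⟩ := mem_filter.1 hx
        rw [mem_Icc] at hxI
        unfold roundUp at hjx
        have hle : gridIndex δ (k - x) ≤ gridIndex δ (k - j) :=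
          (gc_grid_gridIndex δ _ _).1 (by have := grid_gridIndex_le δ (k - x); omega)
        refine mem_image.2 ⟨k - x, mem_range.2 ?_, by omega⟩
        exact (lt_grid_gridIndex_succ δ _).trans_le
          ((strictMono_grid δ).monotone (Nat.succ_le_succ hle))
    _ ≤ N := card_image_le.trans (card_range N).le

lemma one_sub_mul_card_filter_le_roundUp_le (hδ : 0 ≤ δ) {j : ℕ} (hj : j ∈ Icc m k) :
    (1 - δ) * #{x ∈ Icc m k | j ≤ roundUp δ k x} ≤ #{x ∈ Icc m k | j ≤ x} := by
  rw [mem_Icc] at hj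
  have htail : {x ∈ Icc m k | j ≤ x} = Icc j k := by
    ext x
    simp only [mem_filter, mem_Icc]
    omega
  have hgap : (#{x ∈ Icc m k | j ≤ roundUp δ k x} : ℝ) ≤ (1 + δ) * ((k - j : ℕ) + 1) :=
    calc (#{x ∈ Icc m k | j ≤ roundUp δ k x} : ℝ)
        ≤ grid δ (gridIndex δ (k - j) + 1) := by exact_mod_cast card_filter_le_roundUp_le
      _ ≤ (1 + δ) * (grid δ (gridIndex δ (k - j)) + 1) := grid_succ_le hδ _
      _ ≤ (1 + δ) * ((k - j : ℕ) + 1) := by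
        gcongr
        exact_mod_cast grid_gridIndex_le δ (k - j)
  rw [htail, Nat.card_Icc, Nat.cast_sub (by omega), Nat.cast_add, Nat.cast_one]
  rw [Nat.cast_sub hj.2] at hgap
  nlinarith [mul_nonneg hδ hδ, (#{x ∈ Icc m k | j ≤ roundUp δ k x}).cast_nonneg (α := ℝ)]

end Rounding

section Coreset

noncomputable def coreset (δ : ℝ) (m k : ℕ) : Finset ℕ := (Icc m k).image (roundUp δ k)

noncomputable def coresetWeight (δ : ℝ) (m k i : ℕ) : ℝ := #{x ∈ Icc m k | roundUp δ k x = i}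

variable {δ : ℝ} {m k : ℕ}

lemma coreset_subset_Icc : coreset δ m k ⊆ Icc m k :=
  image_subset_iff.2 fun _ => roundUp_mem_Icc

lemma coresetWeight_nonneg (i : ℕ) : 0 ≤ coresetWeight δ m k i := Nat.cast_nonneg _

lemma sum_coreset_coresetWeight_mul (a : ℕ → ℝ) :
    ∑ i ∈ coreset δ m k, coresetWeight δ m k i * a i = ∑ x ∈ Icc m k, a (roundUp δ k x) := by
  rw [coreset, sum_comp a (roundUp δ k)]
  simp only [coresetWeight, nsmul_eq_mul]

theorem coreset_approx (hδ : 0 ≤ δ) {a : ℕ → ℝ} (ha : MonotoneOn a (Set.Icc m k))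
    (ha0 : 0 ≤ a m) :
    (1 - δ) * ∑ i ∈ coreset δ m k, coresetWeight δ m k i * a i ≤ ∑ i ∈ Icc m k, a i ∧
      ∑ i ∈ Icc m k, a i ≤ (1 + δ) * ∑ i ∈ coreset δ m k, coresetWeight δ m k i * a i := by
  rw [sum_coreset_coresetWeight_mul]
  have hround : ∑ x ∈ Icc m k, a x ≤ ∑ x ∈ Icc m k, a (roundUp δ k x) :=
    sum_le_sum fun x hx => ha (mem_Icc.1 hx) (mem_Icc.1 (roundUp_mem_Icc hx))
      (le_roundUp (mem_Icc.1 hx).2)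
  have hnonneg : 0 ≤ ∑ x ∈ Icc m k, a (roundUp δ k x) := by
    refine sum_nonneg fun x hx => ?_
    have hr := mem_Icc.1 (roundUp_mem_Icc (δ := δ) hx)
    exact ha0.trans (ha ⟨le_rfl, hr.1.trans hr.2⟩ hr hr.1)
  refine ⟨mul_sum_comp_le_sum_comp ha ha0 (fun _ => roundUp_mem_Icc) (fun _ hx => hx)
    fun _ => one_sub_mul_card_filter_le_roundUp_le hδ, by nlinarith⟩

theorem card_coreset_le (hδ : 0 < δ) (hm : 1 ≤ m) :
    (#(coreset δ m k) : ℝ) ≤ Real.log k / Real.log (1 + δ) + 1 := by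
  have hlog : 0 < Real.log (1 + δ) := Real.log_pos (by linarith)
  set B := ⌊Real.log k / Real.log (1 + δ)⌋₊
  have hsub : coreset δ m k ⊆ (range (B + 1)).image (k - grid δ ·) := by
    refine image_subset_iff.2 fun x hx => mem_image.2 ⟨gridIndex δ (k - x), ?_, rfl⟩
    rw [mem_Icc] at hx
    have hpow : (1 + δ) ^ gridIndex δ (k - x) ≤ (k : ℝ) :=
      (one_add_pow_gridIndex_le hδ.le _).trans (by exact_mod_cast (by omega : k - x + 1 ≤ k))
    have := Real.log_le_log (by positivity) hpow
    rw [Real.log_pow] at this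
    exact mem_range.2 (Nat.lt_succ_of_le (Nat.le_floor ((le_div_iff₀ hlog).2 this)))
  calc (#(coreset δ m k) : ℝ) ≤ B + 1 := by
        exact_mod_cast (card_le_card hsub).trans (card_image_le.trans (card_range _).le)
    _ ≤ Real.log k / Real.log (1 + δ) + 1 := by
        gcongr
        exact Nat.floor_le (div_nonneg (Real.log_natCast_nonneg k) hlog.le)

end Coreset

lemma log_div_log_one_add_quarter_add_one_le {ε x : ℝ} (hε : 0 < ε) (hε1 : ε ≤ 1) (hx : 2 ≤ x) :
    Real.log x / Real.log (1 + ε / 4) + 1 ≤ 16 * ε⁻¹ * Real.log x := by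
  have hlogx : 1 / 2 < Real.log x :=
    (by linarith [Real.log_two_gt_d9] : 1 / 2 < Real.log 2).trans_le
      (Real.log_le_log (by norm_num) hx)
  have hlogε : ε / 8 ≤ Real.log (1 + ε / 4) := by
    refine le_trans ?_ (Real.one_sub_inv_le_log_of_pos (by positivity))
    have hinv : (1 + ε / 4)⁻¹ = 4 / (4 + ε) := by field_simp
    rw [le_sub_comm, hinv, div_le_iff₀ (by linarith)]
    nlinarith
  calc Real.log x / Real.log (1 + ε / 4) + 1 ≤ Real.log x / (ε / 8) + Real.log x / (ε / 8) := by
        gcongr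
        rw [le_div_iff₀ (by positivity)]
        linarith
    _ = 16 * ε⁻¹ * Real.log x := by field_simp; ring

lemma monotoneOn_kthNNDist {d : ℕ} (P : Finset (EuclideanSpace ℝ (Fin d)))
    (q : EuclideanSpace ℝ (Fin d)) : MonotoneOn (kthNNDist · P q) (Set.Iic #P) := by
  intro i _ j hj hij
  apply csInf_le_csInf ⟨0, fun r hr => hr.1⟩
  · -- the total distance to `P` is at least every single distance
    refine ⟨∑ p ∈ P, dist q p, sum_nonneg fun _ _ => dist_nonneg, ?_⟩
    have hall : {p ∈ P | dist q p ≤ ∑ p ∈ P, dist q p} = P :=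
      filter_true_of_mem fun p hp => single_le_sum (f := (dist q ·)) (fun _ _ => dist_nonneg) hp
    rwa [hall]
  · exact fun r hr => ⟨hr.1, hij.trans hr.2⟩

/-- There is a universal constant `C > 0` such that for all `k ≥ 2` and `ε ∈ (0,1]` there
is a coreset `I ⊆ {⌈kε/8⌉, …, k}` of size at most `C ε⁻¹ log k` with nonnegative weights
`w i`, such that for every nondecreasing nonnegative sequence `a` on `{⌈kε/8⌉, …, k}`,
the weighted sum `Σ_{i ∈ I} w i * a i` approximates `Σ_{i=⌈kε/8⌉}^{k} a i` within a factor
`1 ± ε/4`. In particular this holds for the sequence `i ↦ f(d_i(P,q))` for any point set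
`P` of `n ≥ k` points in `ℝ^d`, any monotone nondecreasing `f : ℝ → [0,∞)`, and any `q`. -/
theorem exists_coreset_for_monotone_sums :
    ∃ C : ℝ, 0 < C ∧ ∀ k : ℕ, 2 ≤ k → ∀ ε : ℝ, 0 < ε → ε ≤ 1 →
      ∃ (I : Finset ℕ) (w : ℕ → ℝ),
        I ⊆ Finset.Icc ⌈(k : ℝ) * ε / 8⌉₊ k ∧
        (∀ i ∈ I, 0 ≤ w i) ∧
        (I.card : ℝ) ≤ C * ε⁻¹ * Real.log k ∧
        (∀ a : ℕ → ℝ,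
          (∀ i ∈ Finset.Icc ⌈(k : ℝ) * ε / 8⌉₊ k, 0 ≤ a i) →
          (∀ i j, ⌈(k : ℝ) * ε / 8⌉₊ ≤ i → i ≤ j → j ≤ k → a i ≤ a j) →
          (1 - ε / 4) * (∑ i ∈ I, w i * a i) ≤
              (∑ i ∈ Finset.Icc ⌈(k : ℝ) * ε / 8⌉₊ k, a i) ∧
            (∑ i ∈ Finset.Icc ⌈(k : ℝ) * ε / 8⌉₊ k, a i) ≤
              (1 + ε / 4) * ∑ i ∈ I, w i * a i) ∧
        (∀ (d n : ℕ) (P : Finset (EuclideanSpace ℝ (Fin d))), P.card = n → k ≤ n →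
          ∀ f : ℝ → ℝ, Monotone f → (∀ x, 0 ≤ f x) →
          ∀ q : EuclideanSpace ℝ (Fin d),
            (1 - ε / 4) * (∑ i ∈ I, w i * f (kthNNDist i P q)) ≤
                (∑ i ∈ Finset.Icc ⌈(k : ℝ) * ε / 8⌉₊ k, f (kthNNDist i P q)) ∧
              (∑ i ∈ Finset.Icc ⌈(k : ℝ) * ε / 8⌉₊ k, f (kthNNDist i P q)) ≤
                (1 + ε / 4) * ∑ i ∈ I, w i * f (kthNNDist i P q)) := by
  refine ⟨16, by norm_num, fun k hk ε hε hε1 => ?_⟩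
  set m := ⌈(k : ℝ) * ε / 8⌉₊
  have hm : 1 ≤ m := Nat.one_le_ceil_iff.2 (by positivity)
  have hmk : m ≤ k := Nat.ceil_le.2 (by nlinarith [(Nat.cast_nonneg k : (0 : ℝ) ≤ k)])
  have happrox {a : ℕ → ℝ} (ha : MonotoneOn a (Set.Icc m k)) (ha0 : 0 ≤ a m) :=
    coreset_approx (δ := ε / 4) (by positivity) ha ha0
  refine ⟨coreset (ε / 4) m k, coresetWeight (ε / 4) m k, coreset_subset_Icc,
    fun i _ => coresetWeight_nonneg i, ?_, ?_, ?_⟩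
  · exact (card_coreset_le (by positivity) hm).trans
      (log_div_log_one_add_quarter_add_one_le hε hε1 (by exact_mod_cast hk))
  · exact fun a ha0 hmono => happrox (fun i hi j hj hij => hmono i j hi.1 hij hj.2)
      (ha0 m (mem_Icc.2 ⟨le_rfl, hmk⟩))
  · intro d n P hP hkn f hf hf0 q
    exact happrox ((hf.comp_monotoneOn (monotoneOn_kthNNDist P q)).mono
      fun i hi => (hi.2.trans (hkn.trans hP.ge) : i ≤ #P)) (hf0 _)
end

section
/- Fix q ∈ ℝ^d, r > 0, and α > 0. Let t be a random vector distributed uniformly in [0, α)^d, and consider the randomly shifted grid whose cells are the cubes t + αz + [0, α)^d for z ∈ ℤ^d. Then the probability that the closed ball B(q, r) is contained inside a single cell of this shifted grid is at least 1 − 2rd/α. -/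
/-!
The cell condition splits over coordinates: `B(q, r)` lies in a cell as soon as, in every
coordinate `i`, the interval `[qᵢ - r, qᵢ + r]` does. In one coordinate, every shift congruent
modulo `α` to a point of `(qᵢ + r - α, qᵢ - r)` is good. Pushed to `AddCircle α`, this periodic
set meets every period in the same measure, so its trace on `[0, α)` has measure `α - 2r`.
Hence the good shifts have volume at least `(α - 2r)^d ≥ (1 - 2rd/α) α^d` (Bernoulli).
-/

open Metric MeasureTheory Set

namespace AddCircle

variable {T : ℝ} [Fact (0 < T)]

theorem volume_Ico_inter_preimage_image_coe {s : Set ℝ} (hs : IsOpen s) {a : ℝ}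
    (hsa : s ⊆ Ioc a (a + T)) (t : ℝ) :
    volume (Ico t (t + T) ∩ ((↑) : ℝ → AddCircle T) ⁻¹' ((↑) '' s)) = volume s := by
  have hE : MeasurableSet (((↑) : ℝ → AddCircle T) '' s) :=
    (QuotientAddGroup.isOpenMap_coe s hs).measurableSet
  have hfiber : ((↑) : ℝ → AddCircle T) ⁻¹' ((↑) '' s) ∩ Ioc a (a + T) = s := by
    refine Subset.antisymm ?_ fun x hx => ⟨mem_image_of_mem _ hx, hsa hx⟩
    rintro x ⟨⟨y, hy, hyx⟩, hx⟩
    rwa [← (coe_eq_coe_iff_of_mem_Ioc (hsa hy) hx).1 hyx]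
  calc volume (Ico t (t + T) ∩ ((↑) : ℝ → AddCircle T) ⁻¹' ((↑) '' s))
      = volume (((↑) : ℝ → AddCircle T) ⁻¹' ((↑) '' s) ∩ Ioc t (t + T)) := by
        rw [inter_comm]; exact measure_congr (ae_eq_set_inter ae_eq_rfl Ico_ae_eq_Ioc)
    _ = volume (((↑) : ℝ → AddCircle T) '' s) := (add_projection_respects_measure T t hE).symm
    _ = volume s := by rw [add_projection_respects_measure T a hE, hfiber]

end AddCircle

theorem EuclideanSpace.volume_setOf_forall_mem {ι : Type*} [Fintype ι] (s : ι → Set ℝ) :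
    volume {t : EuclideanSpace ℝ ι | ∀ i, t i ∈ s i} = ∏ i, volume (s i) := by
  rw [← volume_pi_pi,
    ← (EuclideanSpace.volume_preserving_symm_measurableEquiv_toLp ι).measure_preimage_equiv]
  congr 1
  ext t
  simp [mem_pi]

theorem EuclideanSpace.closedBall_subset_setOf_forall_mem_Icc {ι : Type*} [Fintype ι]
    (q : EuclideanSpace ℝ ι) (r : ℝ) :
    closedBall q r ⊆ {x : EuclideanSpace ℝ ι | ∀ i, x i ∈ Icc (q i - r) (q i + r)} :=
  fun x hx i => by
    rw [← Real.closedBall_eq_Icc]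
    exact (PiLp.dist_apply_le x q i).trans hx

def shiftsWithIntervalInCell (α a b : ℝ) : Set ℝ :=
  {s | ∃ z : ℤ, Icc a b ⊆ Ico (s + α * z) (s + α * z + α)}

theorem ofReal_sub_le_volume_shiftsWithIntervalInCell {α a b : ℝ} (hα : 0 < α) (hab : a ≤ b) :
    ENNReal.ofReal (α - (b - a)) ≤ volume (Ico 0 α ∩ shiftsWithIntervalInCell α a b) := by
  have : Fact (0 < α) := ⟨hα⟩
  have hsub : Ioo (b - α) a ⊆ Ioc (b - α) (b - α + α) := fun x hx =>
    ⟨hx.1, by linarith [hx.2]⟩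
  have hgood : ((↑) : ℝ → AddCircle α) ⁻¹' ((↑) '' Ioo (b - α) a) ⊆
      shiftsWithIntervalInCell α a b := by
    rintro s ⟨x, hx, hxs⟩
    obtain ⟨z, hz⟩ := AddSubgroup.mem_zmultiples_iff.1 (QuotientAddGroup.eq.1 hxs.symm)
    rw [zsmul_eq_mul] at hz
    exact ⟨z, fun y hy => ⟨by linarith [hx.2, hy.1], by linarith [hx.1, hy.2]⟩⟩
  calc ENNReal.ofReal (α - (b - a)) = volume (Ioo (b - α) a) := by
        rw [Real.volume_Ioo]; ring_nf
    _ = volume (Ico 0 (0 + α) ∩ ((↑) : ℝ → AddCircle α) ⁻¹' ((↑) '' Ioo (b - α) a)) :=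
        (AddCircle.volume_Ico_inter_preimage_image_coe isOpen_Ioo hsub 0).symm
    _ ≤ volume (Ico 0 α ∩ shiftsWithIntervalInCell α a b) := by
        rw [zero_add]; exact measure_mono (inter_subset_inter_right _ hgood)

theorem ofReal_one_sub_mul_div_mul_pow_le {α β : ℝ} (hα : 0 < α) (d : ℕ) :
    ENNReal.ofReal ((1 - β * d / α) * α ^ d) ≤ ENNReal.ofReal (α - β) ^ d := by
  rcases le_or_gt β α with hβ | hβ
  · rw [← ENNReal.ofReal_pow (sub_nonneg.2 hβ)]
    apply ENNReal.ofReal_le_ofReal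
    have hbern := one_add_mul_le_pow (a := -(β / α)) (by
      have : β / α ≤ 1 := (div_le_one hα).2 hβ
      linarith) d
    calc (1 - β * d / α) * α ^ d = (1 + d * -(β / α)) * α ^ d := by ring
      _ ≤ (1 + -(β / α)) ^ d * α ^ d := by gcongr
      _ = (α - β) ^ d := by rw [← mul_pow]; field_simp; ring
  · rcases d.eq_zero_or_pos with rfl | hd
    · simp
    rw [ENNReal.ofReal_eq_zero.2]
    · exact bot_le
    apply mul_nonpos_of_nonpos_of_nonneg _ (by positivity)
    have : α ≤ β * d := by nlinarith [(Nat.one_le_cast (α := ℝ)).2 hd]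
    rw [sub_nonpos, one_le_div hα]
    exact this

/-- For a randomly shifted grid of side length `α` (the shift `t` uniform in `[0, α)^d`),
the probability that the closed ball `B(q, r)` is contained in a single grid cell
`t + αz + [0, α)^d` is at least `1 - 2rd/α`. Stated measure-theoretically: the Lebesgue
volume of the set of good shifts `t ∈ [0, α)^d` is at least `(1 - 2rd/α) ⬝ α^d`. -/
theorem shifted_grid_contains_ball {d : ℕ} (q : EuclideanSpace ℝ (Fin d)) (r α : ℝ)
    (hr : 0 < r) (hα : 0 < α) :
    ENNReal.ofReal ((1 - 2 * r * d / α) * α ^ d) ≤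
      volume {t : EuclideanSpace ℝ (Fin d) |
        (∀ i, t i ∈ Set.Ico (0 : ℝ) α) ∧
        ∃ z : Fin d → ℤ, closedBall q r ⊆
          {x : EuclideanSpace ℝ (Fin d) |
            ∀ i, x i ∈ Set.Ico (t i + α * z i) (t i + α * z i + α)}} := by
  have hcoord (i : Fin d) : ENNReal.ofReal (α - 2 * r) ≤
      volume (Ico 0 α ∩ shiftsWithIntervalInCell α (q i - r) (q i + r)) := by
    convert ofReal_sub_le_volume_shiftsWithIntervalInCell hα (by linarith : q i - r ≤ q i + r)
      using 3
    ring
  calc ENNReal.ofReal ((1 - 2 * r * d / α) * α ^ d)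
      ≤ ∏ _i : Fin d, ENNReal.ofReal (α - 2 * r) := by
        simpa using ofReal_one_sub_mul_div_mul_pow_le hα d
    _ ≤ ∏ i, volume (Ico 0 α ∩ shiftsWithIntervalInCell α (q i - r) (q i + r)) :=
        Finset.prod_le_prod' fun i _ => hcoord i
    _ = volume {t : EuclideanSpace ℝ (Fin d) |
          ∀ i, t i ∈ Ico 0 α ∩ shiftsWithIntervalInCell α (q i - r) (q i + r)} :=
        (EuclideanSpace.volume_setOf_forall_mem _).symm
    _ ≤ _ := by
        refine measure_mono fun t ht => ⟨fun i => (ht i).1, ?_⟩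
        choose z hz using fun i => (ht i).2
        exact ⟨z, fun x hx i =>
          hz i (EuclideanSpace.closedBall_subset_setOf_forall_mem_Icc q r hx i)⟩
end

section
/- For every dimension d there is a constant C = C(d) > 0 such that the following holds: for every q ∈ ℝ^d, every grid side length s > 0, and every ℓ ≥ 0, the number of cells of the grid {sz + [0, s)^d : z ∈ ℤ^d} that intersect the closed annulus {x ∈ ℝ^d : ℓ ≤ ‖x − q‖ ≤ ℓ + s√d} is at most C · (ℓ/(s√d) + 1)^{d−1}. -/
open Function Metric MeasureTheory Set Module
open scoped ENNReal

/-!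
A grid cell has volume `s ^ d` and diameter `t = s √d`, and distinct cells are disjoint. A cell
meeting the annulus `ℓ ≤ ‖x - q‖ ≤ ℓ + t` therefore lies in the thickened annulus
`ℓ - t < ‖x - q‖ ≤ ℓ + 2t`, whose volume is at most `d (ℓ + 2t) ^ (d - 1) · 3t` times the volume of
the unit ball, because `R ^ d - r ^ d ≤ d R ^ (d - 1) (R - r)`. Comparing volumes bounds the number
of cells by a constant times `(ℓ / t + 1) ^ (d - 1)`.
-/

theorem ncard_mul_le_measure_of_pairwiseDisjoint {ι α : Type*} [MeasurableSpace α] (μ : Measure α)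
    {S : Set ι} {f : ι → Set α} {A : Set α} {m : ℝ≥0∞}
    (hm : ∀ i ∈ S, m ≤ μ (f i)) (hmeas : ∀ i ∈ S, MeasurableSet (f i))
    (hdisj : S.PairwiseDisjoint f) (hsub : ∀ i ∈ S, f i ⊆ A) :
    S.ncard * m ≤ μ A := by
  obtain hS | hS := S.finite_or_infinite
  swap; · simp [hS.ncard]
  lift S to Finset ι using hS
  calc ((S : Set ι).ncard : ℝ≥0∞) * m = S.card • m := by simp [nsmul_eq_mul]
    _ ≤ ∑ i ∈ S, μ (f i) := Finset.card_nsmul_le_sum _ _ _ hm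
    _ = μ (⋃ i ∈ S, f i) := (measure_biUnion_finset hdisj hmeas).symm
    _ ≤ μ A := measure_mono (iUnion₂_subset hsub)

theorem pow_sub_pow_le_mul_pow_pred {a b : ℝ} (hb : 0 ≤ b) (hba : b ≤ a) (n : ℕ) :
    a ^ n - b ^ n ≤ n * a ^ (n - 1) * (a - b) := by
  have := abs_pow_sub_pow_le a b n
  rw [abs_of_nonneg (sub_nonneg.2 (pow_le_pow_left₀ hb hba n)), abs_of_nonneg (sub_nonneg.2 hba),
    abs_of_nonneg (hb.trans hba), abs_of_nonneg hb, max_eq_left hba] at this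
  linarith

theorem Metric.ball_max_zero {X : Type*} [PseudoMetricSpace X] (x : X) (r : ℝ) :
    ball x (max r 0) = ball x r := by
  rcases le_total r 0 with h | h
  · simp [ball_eq_empty.2 h, max_eq_right h]
  · rw [max_eq_left h]

theorem MeasureTheory.Measure.addHaar_closedBall_diff_ball_le {E : Type*} [NormedAddCommGroup E]
    [NormedSpace ℝ E] [MeasurableSpace E] [BorelSpace E] [FiniteDimensional ℝ E] [Nontrivial E]
    (μ : Measure E) [μ.IsAddHaarMeasure] (x : E) {r R : ℝ} (hR : 0 ≤ R) (hrR : r ≤ R) :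
    μ (closedBall x R \ ball x r) ≤
      ENNReal.ofReal (finrank ℝ E * R ^ (finrank ℝ E - 1) * (R - r)) * μ (ball 0 1) := by
  set n := finrank ℝ E
  have hρ : 0 ≤ max r 0 := le_max_right r 0
  have hρR : max r 0 ≤ R := max_le hrR hR
  rw [← ball_max_zero, measure_sdiff ((ball_subset_ball hρR).trans ball_subset_closedBall)
      measurableSet_ball.nullMeasurableSet measure_ball_lt_top.ne,
    addHaar_closedBall μ x hR, addHaar_ball μ x hρ,
    ← ENNReal.sub_mul fun _ _ => measure_ball_lt_top.ne, ← ENNReal.ofReal_sub _ (pow_nonneg hρ n)]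
  gcongr
  calc R ^ n - max r 0 ^ n ≤ n * R ^ (n - 1) * (R - max r 0) := pow_sub_pow_le_mul_pow_pred hρ hρR n
    _ ≤ n * R ^ (n - 1) * (R - r) := by gcongr; exact le_max_left r 0

def gridCell {ι : Type*} (s : ℝ) (z : ι → ℤ) : Set (EuclideanSpace ℝ ι) :=
  {x | ∀ i, x i ∈ Ico (s * z i) (s * z i + s)}

section GridCell

variable {ι : Type*}

theorem pairwise_disjoint_gridCell (s : ℝ) : Pairwise (Disjoint on gridCell (ι := ι) s) := by
  refine fun z w hzw => disjoint_left.2 fun x hz hw => hzw (funext fun i => ?_)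
  obtain ⟨hz₁, hz₂⟩ := hz i
  obtain ⟨hw₁, hw₂⟩ := hw i
  have hs : 0 < s := by linarith
  have h₁ : z i < w i + 1 := by exact_mod_cast (by nlinarith : (z i : ℝ) < w i + 1)
  have h₂ : w i < z i + 1 := by exact_mod_cast (by nlinarith : (w i : ℝ) < z i + 1)
  omega

theorem gridCell_eq_preimage (s : ℝ) (z : ι → ℤ) :
    gridCell s z = (MeasurableEquiv.toLp 2 (ι → ℝ)).symm ⁻¹'
      univ.pi fun i => Ico (s * z i) (s * z i + s) := by
  ext x
  simp [gridCell, MeasurableEquiv.coe_toLp_symm]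

variable [Fintype ι]

theorem measurableSet_gridCell (s : ℝ) (z : ι → ℤ) : MeasurableSet (gridCell s z) := by
  rw [gridCell_eq_preimage]
  exact (MeasurableEquiv.toLp 2 (ι → ℝ)).symm.measurable (.univ_pi fun _ => measurableSet_Ico)

theorem volume_gridCell (s : ℝ) (z : ι → ℤ) :
    volume (gridCell s z) = ENNReal.ofReal s ^ Fintype.card ι := by
  rw [gridCell_eq_preimage,
    (EuclideanSpace.volume_preserving_symm_measurableEquiv_toLp ι).measure_preimage
      (MeasurableSet.univ_pi fun _ => measurableSet_Ico).nullMeasurableSet, volume_pi_pi]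
  simp [Real.volume_Ico]

theorem dist_le_of_mem_gridCell {s : ℝ} (hs : 0 ≤ s) {z : ι → ℤ} {x y : EuclideanSpace ℝ ι}
    (hx : x ∈ gridCell s z) (hy : y ∈ gridCell s z) : dist x y ≤ s * √(Fintype.card ι) := by
  have hcoord : ∀ i, dist (x i) (y i) ≤ s := fun i => by
    obtain ⟨hx₁, hx₂⟩ := hx i
    obtain ⟨hy₁, hy₂⟩ := hy i
    rw [Real.dist_eq, abs_sub_le_iff]
    constructor <;> linarith
  calc dist x y = √(∑ i, dist (x i) (y i) ^ 2) := EuclideanSpace.dist_eq x y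
    _ ≤ √(∑ _i : ι, s ^ 2) := by gcongr with i; exact hcoord i
    _ = s * √(Fintype.card ι) := by
      rw [Finset.sum_const, Finset.card_univ, nsmul_eq_mul, Real.sqrt_mul (Nat.cast_nonneg _),
        Real.sqrt_sq hs, mul_comm]

end GridCell

theorem subset_closedBall_diff_ball_of_forall_dist_le {X : Type*} [PseudoMetricSpace X]
    {A : Set X} {q y : X} {t ℓ L : ℝ} (hA : ∀ x ∈ A, ∀ x' ∈ A, dist x x' ≤ t) (hy : y ∈ A)
    (hℓ : ℓ ≤ dist y q) (hL : dist y q ≤ L) :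
    A ⊆ closedBall q (L + t) \ ball q (ℓ - t) := by
  intro x hx
  have hxy := hA x hx y hy
  refine ⟨?_, fun hxq => ?_⟩
  · rw [mem_closedBall]
    linarith [dist_triangle x y q]
  · rw [mem_ball] at hxq
    linarith [dist_triangle y x q, dist_comm x y]

theorem ncard_gridCells_meeting_annulus_mul_le {ι : Type*} [Fintype ι] [Nonempty ι]
    (q : EuclideanSpace ℝ ι) {s ℓ : ℝ} (hs : 0 < s) (hℓ : 0 ≤ ℓ) :
    let n := Fintype.card ι
    let t := s * √n
    ({z : ι → ℤ | (gridCell s z ∩ {x | ℓ ≤ dist x q ∧ dist x q ≤ ℓ + t}).Nonempty}.ncard : ℝ) *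
        s ^ n ≤
      n * (ℓ + 2 * t) ^ (n - 1) * (3 * t) * volume.real (ball (0 : EuclideanSpace ℝ ι) 1) := by
  intro n t
  set S := {z : ι → ℤ | (gridCell s z ∩ {x | ℓ ≤ dist x q ∧ dist x q ≤ ℓ + t}).Nonempty}
  have hcount : (S.ncard : ℝ≥0∞) * ENNReal.ofReal s ^ n ≤
      volume (closedBall q (ℓ + t + t) \ ball q (ℓ - t)) :=
    ncard_mul_le_measure_of_pairwiseDisjoint volume (fun z _ => (volume_gridCell s z).ge)
      (fun z _ => measurableSet_gridCell s z) ((pairwise_disjoint_gridCell s).set_pairwise S)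
      fun z ⟨_, hx, hℓx, hxL⟩ => subset_closedBall_diff_ball_of_forall_dist_le
        (fun _ h _ h' => dist_le_of_mem_gridCell hs.le h h') hx hℓx hxL
  have hannulus := (volume.addHaar_closedBall_diff_ball_le q (by positivity : 0 ≤ ℓ + t + t)
    (by linarith [show 0 ≤ t by positivity] : ℓ - t ≤ ℓ + t + t)).trans' hcount
  rwa [finrank_euclideanSpace, show ℓ + t + t - (ℓ - t) = 3 * t by ring,
    show ℓ + t + t = ℓ + 2 * t by ring,
    ← ENNReal.ofReal_toReal measure_ball_lt_top.ne,
    ← ENNReal.ofReal_pow hs.le, ← ENNReal.ofReal_natCast, ← ENNReal.ofReal_mul (by positivity),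
    ← ENNReal.ofReal_mul (by positivity), ENNReal.ofReal_le_ofReal_iff (by positivity)] at hannulus

/-- Packing bound: for every dimension `d ≥ 1` there is a constant `C = C(d) > 0` such
that for every center `q`, grid side length `s > 0` and inner radius `ℓ ≥ 0`, the number
of grid cells `sz + [0, s)^d` meeting the closed annulus
`{x : ℓ ≤ ‖x - q‖ ≤ ℓ + s√d}` is at most `C (ℓ/(s√d) + 1)^{d-1}`. -/
theorem grid_cells_meeting_annulus_bound (d : ℕ) (hd : 0 < d) :
    ∃ C : ℝ, 0 < C ∧
      ∀ (q : EuclideanSpace ℝ (Fin d)) (s ℓ : ℝ), 0 < s → 0 ≤ ℓ →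
        (({z : Fin d → ℤ | ∃ x : EuclideanSpace ℝ (Fin d),
            (∀ i, x i ∈ Set.Ico (s * z i) (s * z i + s)) ∧
            ℓ ≤ dist x q ∧ dist x q ≤ ℓ + s * Real.sqrt d}.ncard : ℝ)) ≤
          C * (ℓ / (s * Real.sqrt d) + 1) ^ (d - 1) := by
  have : Nonempty (Fin d) := ⟨⟨0, hd⟩⟩
  set c := volume.real (ball (0 : EuclideanSpace ℝ (Fin d)) 1)
  have hc : 0 < c := ENNReal.toReal_pos (measure_ball_pos _ _ one_pos).ne' measure_ball_lt_top.ne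
  refine ⟨3 * d * 2 ^ (d - 1) * √d ^ d * c, by positivity, fun q s ℓ hs hℓ => ?_⟩
  have hcount := ncard_gridCells_meeting_annulus_mul_le q hs hℓ
  simp only [Fintype.card_fin] at hcount
  set t := s * √d
  have ht : 0 < t := by positivity
  have hR : ℓ + 2 * t ≤ 2 * t * (ℓ / t + 1) := by
    rw [mul_add, mul_assoc, mul_div_cancel₀ _ ht.ne']; linarith
  have hpow : t * t ^ (d - 1) = s ^ d * √d ^ d := by
    rw [← pow_succ', Nat.sub_add_cancel hd, mul_pow]
  refine le_of_mul_le_mul_right (hcount.trans ?_) (pow_pos hs d)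
  calc d * (ℓ + 2 * t) ^ (d - 1) * (3 * t) * c
      ≤ d * (2 * t * (ℓ / t + 1)) ^ (d - 1) * (3 * t) * c := by gcongr
    _ = 3 * d * 2 ^ (d - 1) * c * (ℓ / t + 1) ^ (d - 1) * (t * t ^ (d - 1)) := by
      rw [mul_pow, mul_pow]; ring
    _ = 3 * d * 2 ^ (d - 1) * √d ^ d * c * (ℓ / t + 1) ^ (d - 1) * s ^ d := by rw [hpow]; ring
end

section
/- Let P be a set of n points in ℝ^d, let 1 ≤ k ≤ n, let ε ∈ (0,1), and set ρ = k/n. Let R ⊆ P be a subset of size m such that k' = ρm is a positive integer and such that R is a relative (ρ/2, ε/2)-approximation for the range space of closed Euclidean balls on P. Let q ∈ ℝ^d and let r ≥ 0 be such that the closed ball B(q, r) contains exactly k' points of R (e.g., r is the distance from q to its k'-th nearest neighbor in R, when the distances from q to the points of R are distinct). Then (1 − ε)·k ≤ |B(q, r) ∩ P| ≤ (1 + ε)·k. -/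
open Metric


lemma aux_rel_bounds (a ρ ε : ℝ) (ha0 : 0 ≤ a) (hρ : 0 < ρ) (hε0 : 0 < ε) (hε1 : ε < 1)
    (H1 : ρ/2 ≤ a → (1 - ε/2)*a ≤ ρ ∧ ρ ≤ (1 + ε/2)*a)
    (H2 : a ≤ ρ/2 → ρ ≤ a + (ε/2)*(ρ/2)) :
    (1 - ε)*ρ ≤ a ∧ a ≤ (1 + ε)*ρ := by
  rcases le_or_gt (ρ/2) a with h | h
  · obtain ⟨hlo, hhi⟩ := H1 h
    constructor
    · nlinarith [mul_le_mul_of_nonneg_left hhi (by linarith : (0:ℝ) ≤ 1 - ε),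
        mul_nonneg (mul_nonneg ha0 hε0.le) (by linarith : (0:ℝ) ≤ 1 - ε)]
    · nlinarith [mul_le_mul_of_nonneg_left hlo (by linarith : (0:ℝ) ≤ 1 + ε),
        mul_nonneg (mul_nonneg ha0 hε0.le) (by linarith : (0:ℝ) ≤ 1 - ε)]
  · exfalso
    have h2 := H2 h.le
    nlinarith [mul_pos hε0 hρ, mul_pos (by linarith : (0:ℝ) < 1 - ε) hρ]

/-- If `R ⊆ P` is a relative `(ρ/2, ε/2)`-approximation for closed balls (`ρ = k/n`),
and the closed ball `B(q, r)` contains exactly `k' = ρ m` points of `R`, then it contains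
between `(1 - ε) k` and `(1 + ε) k` points of `P`. -/
theorem relative_approximation_k_ann {d n m k k' : ℕ}
    (P R : Finset (EuclideanSpace ℝ (Fin d)))
    (hP : P.card = n) (hR : R.card = m) (hsub : R ⊆ P)
    (hk1 : 1 ≤ k) (hkn : k ≤ n)
    (ε : ℝ) (hε0 : 0 < ε) (hε1 : ε < 1)
    (hk' : (k' : ℝ) = (k : ℝ) / n * m) (hk'pos : 0 < k')
    (happrox : ∀ (x : EuclideanSpace ℝ (Fin d)) (rad : ℝ),
      ((k : ℝ) / (2 * n) ≤ ((P.filter fun p => dist x p ≤ rad).card : ℝ) / n →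
        (1 - ε / 2) * (((P.filter fun p => dist x p ≤ rad).card : ℝ) / n) ≤
            ((R.filter fun p => dist x p ≤ rad).card : ℝ) / m ∧
          ((R.filter fun p => dist x p ≤ rad).card : ℝ) / m ≤
            (1 + ε / 2) * (((P.filter fun p => dist x p ≤ rad).card : ℝ) / n)) ∧
      (((P.filter fun p => dist x p ≤ rad).card : ℝ) / n ≤ (k : ℝ) / (2 * n) →
        ((P.filter fun p => dist x p ≤ rad).card : ℝ) / n - (ε / 2) * ((k : ℝ) / (2 * n)) ≤
            ((R.filter fun p => dist x p ≤ rad).card : ℝ) / m ∧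
          ((R.filter fun p => dist x p ≤ rad).card : ℝ) / m ≤
            ((P.filter fun p => dist x p ≤ rad).card : ℝ) / n + (ε / 2) * ((k : ℝ) / (2 * n))))
    (q : EuclideanSpace ℝ (Fin d)) (r : ℝ) (hr : 0 ≤ r)
    (hball : (R.filter fun p => dist q p ≤ r).card = k') :
    (1 - ε) * k ≤ ((P.filter fun p => dist q p ≤ r).card : ℝ) ∧
      ((P.filter fun p => dist q p ≤ r).card : ℝ) ≤ (1 + ε) * k := by
  have hn : 0 < (n:ℝ) := by
    have : 0 < n := lt_of_lt_of_le hk1 hkn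
    exact_mod_cast this
  have hk0 : 0 < (k:ℝ) := by exact_mod_cast hk1
  have hm : 0 < (m:ℝ) := by
    rcases Nat.eq_zero_or_pos m with h | h
    · exfalso; rw [h] at hk'; simp at hk'; omega
    · exact_mod_cast h
  have hRb : ((R.filter fun p => dist q p ≤ r).card : ℝ) = k' := by exact_mod_cast hball
  have hb : ((R.filter fun p => dist q p ≤ r).card : ℝ) / m = (k:ℝ) / n := by
    rw [hRb, hk']; field_simp
  set A : ℝ := ((P.filter fun p => dist q p ≤ r).card : ℝ) with hA
  have hhalf : (k:ℝ) / (2*n) = ((k:ℝ)/n)/2 := by ring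
  have H := happrox q r
  rw [hb, hhalf] at H
  have hρ : 0 < (k:ℝ)/n := by positivity
  have ha0 : 0 ≤ A/n := by positivity
  have haux := aux_rel_bounds (A/n) ((k:ℝ)/n) ε ha0 hρ hε0 hε1
    (fun h => H.1 h) (fun h => (H.2 h).2)
  have e1 : ((k:ℝ)/n)*n = k := div_mul_cancel₀ _ hn.ne'
  have e2 : (A/n)*n = A := div_mul_cancel₀ _ hn.ne'
  constructor
  · calc (1-ε)*(k:ℝ) = ((1-ε)*((k:ℝ)/n))*n := by rw [mul_assoc, e1]
      _ ≤ (A/n)*n := mul_le_mul_of_nonneg_right haux.1 hn.le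
      _ = A := e2
  · calc A = (A/n)*n := e2.symm
      _ ≤ ((1+ε)*((k:ℝ)/n))*n := mul_le_mul_of_nonneg_right haux.2 hn.le
      _ = (1+ε)*k := by rw [mul_assoc, e1]
end
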